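/- arXiv:1303.5764 — 9 statements merged into one kernel-verified Lean document; each statement's English description precedes it below -/
import Mathlib

section
/- Let φ be a (σ,ε)-sesquilinear form on V. If there exists a maximal totally isotropic subspace of V of finite dimension, then φ admits a Witt index: any two maximal totally isotropic subspaces of V have the same (finite) dimension. -/
open MulOpposite

variable {K : Type*} [DivisionRing K]

/-- `σ` is an anti-automorphism of the division ring `K`. -/
def IsAntiAuto (σ : K → K) : Prop :=
  Function.Bijective σ ∧ (∀ a b : K, σ (a + b) = σ a + σ b) ∧
    ∀ a b : K, σ (a * b) = σ b * σ a

/-- `(σ, ε)` is an admissible pair: `σ` is an anti-automorphism, `ε ≠ 0`,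
`σ ε = ε⁻¹` and `σ ∘ σ` is conjugation by `ε`. -/
def IsAdmissiblePair (σ : K → K) (ε : K) : Prop :=
  IsAntiAuto σ ∧ ε ≠ 0 ∧ σ ε = ε⁻¹ ∧ ∀ t : K, σ (σ t) = ε * t * ε⁻¹

variable {V : Type*} [AddCommGroup V] [Module Kᵐᵒᵖ V]

/-- `φ` is a reflexive `(σ, ε)`-sesquilinear form on the right `K`-vector space `V`
(a right `K`-vector space is a left `Kᵐᵒᵖ`-vector space; right scalar multiplication
of `x` by `α` is `op α • x`). -/
def IsSesq (σ : K → K) (ε : K) (φ : V → V → K) : Prop :=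
  (∀ x y z : V, φ (x + y) z = φ x z + φ y z) ∧
  (∀ x y z : V, φ x (y + z) = φ x y + φ x z) ∧
  (∀ (α : K) (x y : V), φ (op α • x) y = σ α * φ x y) ∧
  (∀ (β : K) (x y : V), φ x (op β • y) = φ x y * β) ∧
  ∀ x y : V, φ y x = σ (φ x y) * ε

/-- A subspace `S` of `V` is totally isotropic for `φ` if `φ` vanishes identically on it. -/
def IsTotIso (φ : V → V → K) (S : Submodule Kᵐᵒᵖ V) : Prop :=
  ∀ x ∈ S, ∀ y ∈ S, φ x y = 0

/-- A maximal totally isotropic subspace: totally isotropic and maximal under inclusion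
among totally isotropic subspaces. -/
def IsMaxTotIso (φ : V → V → K) (S : Submodule Kᵐᵒᵖ V) : Prop :=
  IsTotIso φ S ∧ ∀ T : Submodule Kᵐᵒᵖ V, IsTotIso φ T → S ≤ T → T = S

/-- `φ` is trace-valued: every `φ(x,x)` is of the form `t + σ(t)ε`. -/
def IsTraceValued (σ : K → K) (ε : K) (φ : V → V → K) : Prop :=
  ∀ x : V, ∃ t : K, φ x x = t + σ t * ε

/-! Let `M` be a finite-dimensional maximal totally isotropic subspace and `N` any totally
isotropic subspace, and split `M = (M ⊓ N) ⊕ C`, `N = (M ⊓ N) ⊕ D` along a common complement of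
`M ⊓ N`. If `y ∈ D` is orthogonal to `C`, it is orthogonal to all of `M`, so `M + ⟨y⟩` is
totally isotropic and maximality puts `y` in `(M ⊓ N) ⊓ D = 0`. Hence pairing against a basis of
`C` embeds `D` into `Kᵐᵒᵖ ^ dim C`, giving `dim N ≤ dim M`. Applied in both directions, this
gives finiteness and equality of dimensions for all maximal totally isotropic subspaces. -/

theorem IsCompl.sup_inf_eq_of_le {α : Type*} [Lattice α] [BoundedOrder α] [IsModularLattice α]
    {a b c : α} (hac : IsCompl a c) (hab : a ≤ b) : a ⊔ b ⊓ c = b := by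
  rw [inf_comm, ← sup_inf_assoc_of_le c hab, hac.sup_eq_top, top_inf_eq]

theorem Submodule.rank_eq_rank_add_rank_inf_of_isCompl {R M : Type*} [DivisionRing R]
    [AddCommGroup M] [Module R M] {p q r : Submodule R M} (hpq : p ≤ q) (hpr : IsCompl p r) :
    Module.rank R q = Module.rank R p + Module.rank R ↥(q ⊓ r) := by
  have hinf : p ⊓ (q ⊓ r) = ⊥ := eq_bot_iff.2 fun x hx => hpr.inf_eq_bot ▸ ⟨hx.1, hx.2.2⟩
  rw [← Submodule.rank_sup_add_rank_inf_eq, hpr.sup_inf_eq_of_le hpq, hinf, rank_bot, add_zero]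

theorem IsAntiAuto.map_zero {σ : K → K} (hσ : IsAntiAuto σ) : σ 0 = 0 := by
  have h := hσ.2.1 0 0
  rwa [add_zero, left_eq_add] at h

namespace IsSesq

variable {σ : K → K} {ε : K} {φ : V → V → K}

theorem eq_zero_symm (hσ : IsAntiAuto σ) (hφ : IsSesq σ ε φ) {x y : V} (h : φ x y = 0) :
    φ y x = 0 := by
  rw [hφ.2.2.2.2, h, hσ.map_zero, zero_mul]

theorem zero_left (hφ : IsSesq σ ε φ) (y : V) : φ 0 y = 0 := by
  have h := hφ.1 0 0 y
  rwa [add_zero, left_eq_add] at h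

def leftOrth (hφ : IsSesq σ ε φ) (y : V) : Submodule Kᵐᵒᵖ V where
  carrier := {x | φ x y = 0}
  zero_mem' := hφ.zero_left y
  add_mem' {x x'} (hx : φ x y = 0) (hx' : φ x' y = 0) := by
    show φ (x + x') y = 0
    rw [hφ.1, hx, hx', add_zero]
  smul_mem' α x (hx : φ x y = 0) := by
    show φ (α • x) y = 0
    rw [← op_unop α, hφ.2.2.1, hx, mul_zero]

theorem mem_leftOrth (hφ : IsSesq σ ε φ) {x y : V} : x ∈ hφ.leftOrth y ↔ φ x y = 0 := Iff.rfl

/-- Right scalar multiplication by `β` is `op β • ·`, so `y ↦ op (φ x y)` is `Kᵐᵒᵖ`-linear. -/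
def rightFunctional (hφ : IsSesq σ ε φ) (x : V) : V →ₗ[Kᵐᵒᵖ] Kᵐᵒᵖ where
  toFun y := op (φ x y)
  map_add' y y' := by rw [hφ.2.1, op_add]
  map_smul' β y := by
    rw [← op_unop β, hφ.2.2.2.1, op_mul, op_unop]
    rfl

theorem rightFunctional_apply (hφ : IsSesq σ ε φ) (x y : V) :
    hφ.rightFunctional x y = op (φ x y) := rfl

theorem mem_ker_rightFunctional (hφ : IsSesq σ ε φ) {x y : V} :
    y ∈ LinearMap.ker (hφ.rightFunctional x) ↔ φ x y = 0 := by
  rw [LinearMap.mem_ker, rightFunctional_apply, op_eq_zero_iff]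

end IsSesq

section

variable {σ : K → K} {ε : K} {φ : V → V → K}
open Submodule

theorem IsMaxTotIso.mem_of_forall_eq_zero (hσ : IsAntiAuto σ) (hφ : IsSesq σ ε φ)
    {M : Submodule Kᵐᵒᵖ V} (hM : IsMaxTotIso φ M) {y : V} (hyy : φ y y = 0)
    (hMy : ∀ m ∈ M, φ m y = 0) : y ∈ M := by
  set T := M ⊔ span Kᵐᵒᵖ {y}
  have hT_orth : ∀ x, (∀ m ∈ M, φ x m = 0) → φ x y = 0 → ∀ z ∈ T, φ x z = 0 := by
    intro x hxM hxy z hz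
    have hT : T ≤ LinearMap.ker (hφ.rightFunctional x) :=
      sup_le (fun m hm => hφ.mem_ker_rightFunctional.2 (hxM m hm))
        (span_singleton_le_iff_mem _ _ |>.2 (hφ.mem_ker_rightFunctional.2 hxy))
    exact hφ.mem_ker_rightFunctional.1 (hT hz)
  have hT : IsTotIso φ T := by
    intro x hx z hz
    have hyM : ∀ m ∈ M, φ y m = 0 := fun m hm => hφ.eq_zero_symm hσ (hMy m hm)
    have hT : T ≤ hφ.leftOrth z :=
      sup_le (fun m hm => hφ.mem_leftOrth.2 (hT_orth m (hM.1 m hm) (hMy m hm) z hz))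
        (span_singleton_le_iff_mem _ _ |>.2 (hφ.mem_leftOrth.2 (hT_orth y hyM hyy z hz)))
    exact hφ.mem_leftOrth.1 (hT hx)
  rw [← hM.2 T hT le_sup_left]
  exact mem_sup_right (mem_span_singleton_self y)

theorem IsTotIso.rank_le_of_isMaxTotIso (hσ : IsAntiAuto σ) (hφ : IsSesq σ ε φ)
    {M N : Submodule Kᵐᵒᵖ V} (hN : IsTotIso φ N) (hM : IsMaxTotIso φ M)
    [FiniteDimensional Kᵐᵒᵖ M] : Module.rank Kᵐᵒᵖ N ≤ Module.rank Kᵐᵒᵖ M := by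
  obtain ⟨W', hW'⟩ := Submodule.exists_isCompl (M ⊓ N)
  set C := M ⊓ W'
  set D := N ⊓ W'
  have : FiniteDimensional Kᵐᵒᵖ C := finiteDimensional_of_le inf_le_left
  let b := Module.finBasis Kᵐᵒᵖ C
  let L : V →ₗ[Kᵐᵒᵖ] (Fin _ → Kᵐᵒᵖ) := LinearMap.pi fun i => hφ.rightFunctional (b i)
  have hL : Function.Injective (L.domRestrict D) := by
    refine (injective_iff_map_eq_zero _).2 fun ⟨y, hyN, hyW'⟩ hy => ?_
    have hby : ∀ i, (b i : V) ∈ hφ.leftOrth y := fun i =>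
      hφ.mem_leftOrth.2 (hφ.mem_ker_rightFunctional.1 (LinearMap.mem_ker.2 (congr_fun hy i)))
    have hC : C ≤ hφ.leftOrth y := by
      have hspan : ⊤ ≤ (hφ.leftOrth y).comap C.subtype :=
        b.span_eq ▸ span_le.2 (Set.range_subset_iff.2 hby)
      exact fun c hc => hspan (mem_top (x := ⟨c, hc⟩))
    have hM_orth : M ≤ hφ.leftOrth y := by
      rw [← hW'.sup_inf_eq_of_le inf_le_left]
      exact sup_le (fun w hw => hφ.mem_leftOrth.2 (hN w hw.2 y hyN)) hC
    have hyM := hM.mem_of_forall_eq_zero hσ hφ (hN y hyN y hyN) fun m hm => hφ.mem_leftOrth.1 (hM_orth hm)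
    have hy0 : y ∈ M ⊓ N ⊓ W' := ⟨⟨hyM, hyN⟩, hyW'⟩
    rw [hW'.inf_eq_bot, mem_bot] at hy0
    exact Subtype.ext hy0
  have hD : Module.rank Kᵐᵒᵖ D ≤ Module.finrank Kᵐᵒᵖ C := by
    have h := (L.domRestrict D).lift_rank_le_of_injective hL
    rwa [rank_fin_fun, Cardinal.lift_natCast, Cardinal.lift_le_nat_iff] at h
  calc Module.rank Kᵐᵒᵖ N = Module.rank Kᵐᵒᵖ ↥(M ⊓ N) + Module.rank Kᵐᵒᵖ D :=
        rank_eq_rank_add_rank_inf_of_isCompl inf_le_right hW'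
    _ ≤ Module.rank Kᵐᵒᵖ ↥(M ⊓ N) + Module.finrank Kᵐᵒᵖ C := by gcongr
    _ = Module.rank Kᵐᵒᵖ M := by
        rw [Module.finrank_eq_rank, rank_eq_rank_add_rank_inf_of_isCompl inf_le_left hW']

end

/-- If some maximal totally isotropic subspace has finite dimension, then
`φ` admits a Witt index: any two maximal totally isotropic subspaces have the same
(finite) dimension. -/
theorem stmt_2 (σ : K → K) (ε : K) (hpair : IsAdmissiblePair σ ε)
    (φ : V → V → K) (hφ : IsSesq σ ε φ)
    (hex : ∃ M : Submodule Kᵐᵒᵖ V, IsMaxTotIso φ M ∧ FiniteDimensional Kᵐᵒᵖ ↥M) :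
    ∀ M M' : Submodule Kᵐᵒᵖ V, IsMaxTotIso φ M → IsMaxTotIso φ M' →
      FiniteDimensional Kᵐᵒᵖ ↥M ∧ Module.rank Kᵐᵒᵖ ↥M = Module.rank Kᵐᵒᵖ ↥M' := by
  obtain ⟨M₀, hM₀, hfin₀⟩ := hex
  have hfin : ∀ M, IsMaxTotIso φ M → FiniteDimensional Kᵐᵒᵖ M := fun M hM =>
    Module.rank_lt_aleph0_iff.1
      ((hM.1.rank_le_of_isMaxTotIso hpair.1 hφ hM₀).trans_lt (Module.rank_lt_aleph0 _ _))
  intro M M' hM hM'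
  have := hfin M hM
  have := hfin M' hM'
  exact ⟨hfin M hM, le_antisymm (hM.1.rank_le_of_isMaxTotIso hpair.1 hφ hM')
    (hM'.1.rank_le_of_isMaxTotIso hpair.1 hφ hM)⟩
end

section
/- Let φ be a trace-valued (σ,ε)-sesquilinear form on V, let a be a nonzero isotropic vector with a ∉ Rad(φ), and let l be a 2-dimensional subspace of V containing a such that l is not contained in a⊥. Then there exists an isotropic vector b ∈ l with b ≠ 0 and span{b} ≠ span{a}. -/
open MulOpposite

variable {K : Type*} [DivisionRing K]

variable {V : Type*} [AddCommGroup V] [Module Kᵐᵒᵖ V]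

/-!
Pick `c ∈ l` with `φ(a, c) ≠ 0` and rescale it so that `φ(a, c) = ε`, hence `φ(c, a) = 1`.
Trace-valuedness gives `φ(c, c) = s + σ(s)ε`, and `b = a(-s) + c` is isotropic because the
cross terms `-σ(s)ε - s` of `φ(b, b)` cancel `φ(c, c)`. As `φ(b, a) = 1` while `φ(x, a) = 0` for
every `x ∈ span{a}`, `b` lies outside `span{a}`.
-/

theorem IsAntiAuto.map_neg {σ : K → K} (hσ : IsAntiAuto σ) (x : K) : σ (-x) = -σ x :=
  (AddMonoidHom.mk' σ hσ.2.1).map_neg x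

namespace IsSesq

variable {σ : K → K} {ε : K} {φ : V → V → K}

theorem add_left (hφ : IsSesq σ ε φ) (x y z : V) : φ (x + y) z = φ x z + φ y z := hφ.1 x y z

theorem add_right (hφ : IsSesq σ ε φ) (x y z : V) : φ x (y + z) = φ x y + φ x z := hφ.2.1 x y z

theorem smul_left (hφ : IsSesq σ ε φ) (α : K) (x y : V) : φ (op α • x) y = σ α * φ x y :=
  hφ.2.2.1 α x y

theorem smul_right (hφ : IsSesq σ ε φ) (β : K) (x y : V) : φ x (op β • y) = φ x y * β :=
  hφ.2.2.2.1 β x y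

theorem apply_comm (hφ : IsSesq σ ε φ) (x y : V) : φ y x = σ (φ x y) * ε := hφ.2.2.2.2 x y

theorem apply_left_eq_zero_of_mem_span_singleton (hφ : IsSesq σ ε φ) {a x : V}
    (ha : φ a a = 0) (hx : x ∈ Submodule.span Kᵐᵒᵖ {a}) : φ x a = 0 := by
  obtain ⟨r, rfl⟩ := Submodule.mem_span_singleton.mp hx
  rw [← op_unop r, hφ.smul_left, ha, mul_zero]

theorem apply_eq_one_of_apply_eq (hφ : IsSesq σ ε φ) (hε : ε ≠ 0) (hσε : σ ε = ε⁻¹) {a c : V}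
    (hac : φ a c = ε) : φ c a = 1 := by
  rw [hφ.apply_comm, hac, hσε, inv_mul_cancel₀ hε]

theorem apply_self_smul_add_eq_zero (hφ : IsSesq σ ε φ) (hσ : IsAntiAuto σ) {a c : V} {s : K}
    (ha : φ a a = 0) (hac : φ a c = ε) (hca : φ c a = 1) (hc : φ c c = s + σ s * ε) :
    φ (op (-s) • a + c) (op (-s) • a + c) = 0 := by
  simp only [hφ.add_left, hφ.add_right, hφ.smul_left, hφ.smul_right, ha, hac, hca, hc,
    hσ.map_neg]
  noncomm_ring

end IsSesq

theorem stmt_5_general (σ : K → K) (ε : K) (hpair : IsAdmissiblePair σ ε)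
    (φ : V → V → K) (hφ : IsSesq σ ε φ) (htv : IsTraceValued σ ε φ)
    (a : V) (haiso : φ a a = 0)
    (l : Submodule Kᵐᵒᵖ V) (hal : a ∈ l)
    (hlnsub : ¬ (l : Set V) ⊆ {x : V | φ a x = 0}) :
    ∃ b ∈ l, φ b b = 0 ∧ b ≠ 0 ∧
      Submodule.span Kᵐᵒᵖ ({b} : Set V) ≠ Submodule.span Kᵐᵒᵖ ({a} : Set V) := by
  obtain ⟨hσ, hε, hσε, -⟩ := hpair
  obtain ⟨c, hcl, hac⟩ : ∃ c ∈ l, φ a c ≠ 0 := by simpa [Set.not_subset] using hlnsub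
  set c' := op ((φ a c)⁻¹ * ε) • c
  have hac' : φ a c' = ε := by rw [hφ.smul_right, ← mul_assoc, mul_inv_cancel₀ hac, one_mul]
  have hc'a : φ c' a = 1 := hφ.apply_eq_one_of_apply_eq hε hσε hac'
  obtain ⟨s, hs⟩ := htv c'
  set b := op (-s) • a + c'
  have hba : φ b a = 1 := by rw [hφ.add_left, hφ.smul_left, haiso, mul_zero, zero_add, hc'a]
  have hb : b ∉ Submodule.span Kᵐᵒᵖ {a} := fun hb ↦
    one_ne_zero (hba ▸ hφ.apply_left_eq_zero_of_mem_span_singleton haiso hb)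
  exact ⟨b, l.add_mem (l.smul_mem _ hal) (l.smul_mem _ hcl),
    hφ.apply_self_smul_add_eq_zero hσ haiso hac' hc'a hs,
    fun hb0 ↦ hb (hb0 ▸ Submodule.zero_mem _),
    fun hspan ↦ hb (hspan ▸ Submodule.mem_span_singleton_self b)⟩

/-- For a trace-valued form `φ`, a nonzero isotropic vector `a ∉ Rad(φ)`,
and a 2-dimensional subspace `l` containing `a` with `l ⊄ a⊥`, there exists a nonzero
isotropic vector `b ∈ l` with `span{b} ≠ span{a}`. -/
theorem stmt_5 (σ : K → K) (ε : K) (hpair : IsAdmissiblePair σ ε)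
    (φ : V → V → K) (hφ : IsSesq σ ε φ) (htv : IsTraceValued σ ε φ)
    (a : V) (ha0 : a ≠ 0) (haiso : φ a a = 0) (harad : ¬ ∀ x : V, φ a x = 0)
    (l : Submodule Kᵐᵒᵖ V) (hal : a ∈ l) (hl2 : Module.rank Kᵐᵒᵖ ↥l = 2)
    (hlnsub : ¬ (l : Set V) ⊆ {x : V | φ a x = 0}) :
    ∃ b ∈ l, φ b b = 0 ∧ b ≠ 0 ∧
      Submodule.span Kᵐᵒᵖ ({b} : Set V) ≠ Submodule.span Kᵐᵒᵖ ({a} : Set V) :=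
  stmt_5_general σ ε hpair φ hφ htv a haiso l hal hlnsub
end

section
/- Let φ be a (σ,ε)-sesquilinear form on V which is not the zero form and suppose there exists a nonzero isotropic vector. Then the isotropic vectors span V if and only if both of the following hold: (a) φ is trace-valued, and (b) there exists an isotropic vector not contained in Rad(φ). -/
open MulOpposite

variable {K : Type*} [DivisionRing K]

variable {V : Type*} [AddCommGroup V] [Module Kᵐᵒᵖ V]

/-- If `φ` is not the zero form and there is a nonzero isotropic vector,
then the isotropic vectors span `V` if and only if `φ` is trace-valued and some
isotropic vector lies outside `Rad(φ)`. -/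
theorem stmt_6 (σ : K → K) (ε : K) (hpair : IsAdmissiblePair σ ε)
    (φ : V → V → K) (hφ : IsSesq σ ε φ)
    (hnz : ∃ x y : V, φ x y ≠ 0)
    (hiso : ∃ x : V, x ≠ 0 ∧ φ x x = 0) :
    Submodule.span Kᵐᵒᵖ {x : V | φ x x = 0} = ⊤ ↔
      (IsTraceValued σ ε φ ∧ ∃ a : V, φ a a = 0 ∧ ¬ ∀ x : V, φ a x = 0) := by
  obtain ⟨⟨⟨σinj, σsurj⟩, σadd, σmul⟩, hε, hσε, hσσ⟩ := hpair
  obtain ⟨addl, addr, smull, smulr, hrefl⟩ := hφ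
  have σ0 : σ 0 = 0 := by
    have h := σadd 0 0
    rw [add_zero] at h
    exact (left_eq_add.mp h)
  have σ1 : σ 1 = 1 := by
    have h1 : σ 1 ≠ 0 := by
      intro h0
      obtain ⟨c, hc⟩ := σsurj 1
      have h2 := σmul c 1
      rw [mul_one, h0, zero_mul] at h2
      rw [h2] at hc
      exact one_ne_zero hc.symm
    have h := σmul 1 1
    rw [mul_one] at h
    have : σ 1 * σ 1 = 1 * σ 1 := by rw [← h, one_mul]
    exact mul_right_cancel₀ h1 this
  have σne : ∀ {c : K}, c ≠ 0 → σ c ≠ 0 := by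
    intro c hc h0
    exact hc (σinj (by rw [h0, σ0]))
  have σneg : ∀ t : K, σ (-t) = -σ t := by
    intro t
    have h := σadd t (-t)
    rw [add_neg_cancel, σ0] at h
    exact (eq_neg_of_add_eq_zero_right h.symm)
  have σinv : ∀ {c : K}, c ≠ 0 → σ c⁻¹ = (σ c)⁻¹ := by
    intro c hc
    have h := σmul c⁻¹ c
    rw [inv_mul_cancel₀ hc, σ1] at h
    exact (eq_inv_of_mul_eq_one_right h.symm)
  have φ0l : ∀ y : V, φ 0 y = 0 := by
    intro y
    have h := addl 0 0 y
    rw [add_zero] at h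
    exact (left_eq_add.mp h)
  constructor
  · intro hspan
    constructor
    · -- trace-valued
      intro x
      let T : Submodule Kᵐᵒᵖ V :=
        { carrier := {v : V | ∃ t : K, φ v v = t + σ t * ε}
          add_mem' := by
            rintro v w ⟨t, ht⟩ ⟨u, hu⟩
            refine ⟨t + φ v w + u, ?_⟩
            simp only [addl, addr, ht, hu, hrefl v w, σadd, add_mul]
            abel
          zero_mem' := ⟨0, by rw [φ0l, σ0, zero_mul, add_zero]⟩
          smul_mem' := by
            rintro c v ⟨t, ht⟩
            refine ⟨σ c.unop * t * c.unop, ?_⟩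
            have hc : c = op c.unop := rfl
            rw [hc, smull, smulr, ht]
            simp only [unop_op]
            have hσ : σ (σ c.unop * t * c.unop) * ε = σ c.unop * σ t * ε * c.unop := by
              rw [σmul, σmul, hσσ]
              simp [mul_assoc, inv_mul_cancel₀ hε]
            rw [hσ]
            noncomm_ring }
      have hsub : {v : V | φ v v = 0} ⊆ T := by
        intro y hy
        exact ⟨0, by rw [hy, σ0, zero_mul, add_zero]⟩
      have hle := Submodule.span_le.mpr hsub
      rw [hspan] at hle
      exact hle Submodule.mem_top
    · by_contra hcon
      push_neg at hcon
      let R : Submodule Kᵐᵒᵖ V :=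
        { carrier := {v : V | ∀ y : V, φ v y = 0}
          add_mem' := by
            intro v w hv hw y
            rw [addl, hv y, hw y, add_zero]
          zero_mem' := fun y => φ0l y
          smul_mem' := by
            intro c v hv y
            have hc : c = op c.unop := rfl
            rw [hc, smull, hv y, mul_zero] }
      have hsub : {v : V | φ v v = 0} ⊆ R := by
        intro v hv
        exact hcon v hv
      have hle := Submodule.span_le.mpr hsub
      rw [hspan] at hle
      obtain ⟨x, y, hxy⟩ := hnz
      exact hxy ((hle Submodule.mem_top : x ∈ R) y)
  · rintro ⟨htv, a, ha0, hanr⟩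
    push_neg at hanr
    obtain ⟨b, hb⟩ := hanr
    have key : ∀ x : V, φ a x ≠ 0 →
        x ∈ Submodule.span Kᵐᵒᵖ {v : V | φ v v = 0} := by
      intro x hx
      obtain ⟨t, ht⟩ := htv x
      obtain ⟨α, hα⟩ := σsurj (-(t * (φ a x)⁻¹))
      have h1 : σ α * φ a x = -t := by
        rw [hα, neg_mul, mul_assoc, inv_mul_cancel₀ hx, mul_one]
      have hεα : ε * α = σ (σ α) * ε := by
        rw [hσσ]
        simp [mul_assoc, inv_mul_cancel₀ hε]
      have hσσα : σ (σ α) = -((σ (φ a x))⁻¹ * σ t) := by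
        rw [hα, σneg, σmul, σinv hx]
      have h2 : σ (φ a x) * ε * α = -(σ t * ε) := by
        rw [mul_assoc, hεα, hσσα]
        simp [mul_assoc, mul_inv_cancel_left₀ (σne hx)]
      have hiso2 : φ (x + op α • a) (x + op α • a) = 0 := by
        have e1 : φ (x + op α • a) (x + op α • a)
            = φ x x + φ x a * α + (σ α * φ a x + σ α * (φ a a * α)) := by
          simp only [addl, addr, smull, smulr]
        rw [e1, ha0, ht, hrefl a x, h1, h2]
        simp
      have hmem : x + op α • a ∈ Submodule.span Kᵐᵒᵖ {v : V | φ v v = 0} :=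
        Submodule.subset_span hiso2
      have hmema : (op α • a : V) ∈ Submodule.span Kᵐᵒᵖ {v : V | φ v v = 0} :=
        Submodule.smul_mem _ _ (Submodule.subset_span ha0)
      have hx2 : x = (x + op α • a) - op α • a := by abel
      rw [hx2]
      exact sub_mem hmem hmema
    rw [eq_top_iff]
    intro x _
    by_cases hx : φ a x = 0
    · have hxb : φ a (x + b) ≠ 0 := by
        rw [addr, hx, zero_add]
        exact hb
      have h1 := key (x + b) hxb
      have h2 := key b hb
      have hx2 : x = (x + b) - b := by abel
      rw [hx2]
      exact sub_mem h1 h2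
    · exact key x hx
end

section
/- Suppose that either char(K) ≠ 2, or char(K) = 2 and the restriction of σ to the center Z(K) is not the identity. Then K₁ = K₂, where K₁ = {t ∈ K : t = σ(t)ε} and K₂ = {t + σ(t)ε : t ∈ K}. Consequently every (σ,ε)-sesquilinear form on a right K-vector space is trace-valued. -/
open MulOpposite

variable {K : Type*} [DivisionRing K]

variable {V : Type*} [AddCommGroup V] [Module Kᵐᵒᵖ V]

/-!
The map `t ↦ σ(t)ε` is an additive involution of `K`, so its traces `t + σ(t)ε` are fixed
points. Conversely, if `c` is central with `c + σ(c) = 1`, every fixed point `t` is the trace of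
`c t`. Such a `c` is `1/2` when `char K ≠ 2`, and `z (z - σ z)⁻¹` for a central `z` with
`σ z ≠ z` (then `σ` negates `z - σ z`). Finally `φ(x,x)` is always a fixed point, by the `ε`-symmetry of `φ`.
-/

namespace IsAntiAuto

variable {σ : K → K}

theorem map_zero_s7 (hσ : IsAntiAuto σ) : σ 0 = 0 := by
  simpa using hσ.2.1 0 0

theorem map_one (hσ : IsAntiAuto σ) : σ 1 = 1 := by
  have h1 : σ 1 ≠ 0 := fun h => one_ne_zero (hσ.1.1 (h.trans hσ.map_zero_s7.symm))
  have h := hσ.2.2 1 1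
  rw [one_mul] at h
  exact (mul_eq_left₀ h1).1 h.symm

def toRingHom (hσ : IsAntiAuto σ) : K →+* Kᵐᵒᵖ where
  toFun a := op (σ a)
  map_one' := by rw [hσ.map_one, op_one]
  map_mul' a b := by rw [hσ.2.2, op_mul]
  map_zero' := by rw [hσ.map_zero_s7, op_zero]
  map_add' a b := by rw [hσ.2.1, op_add]

theorem map_sub (hσ : IsAntiAuto σ) (a b : K) : σ (a - b) = σ a - σ b :=
  congrArg unop (_root_.map_sub hσ.toRingHom a b)

theorem map_inv (hσ : IsAntiAuto σ) (a : K) : σ a⁻¹ = (σ a)⁻¹ :=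
  congrArg unop (map_inv₀ hσ.toRingHom a)

theorem map_mem_center (hσ : IsAntiAuto σ) {z : K} (hz : z ∈ Set.center K) :
    σ z ∈ Set.center K := by
  refine Semigroup.mem_center_iff.2 fun g => ?_
  obtain ⟨b, rfl⟩ := hσ.1.2 g
  rw [← hσ.2.2, ← hσ.2.2, Semigroup.mem_center_iff.1 hz b]

theorem eq_trace_of_mem_center (hσ : IsAntiAuto σ) {ε c t : K} (hc : c ∈ Set.center K)
    (hc1 : c + σ c = 1) (ht : t = σ t * ε) : t = c * t + σ (c * t) * ε := by
  have hσc : σ t * σ c = σ c * σ t := Semigroup.mem_center_iff.1 (hσ.map_mem_center hc) (σ t)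
  rw [hσ.2.2, hσc, mul_assoc, ← ht, ← add_mul, hc1, one_mul]

theorem exists_mem_center_add_eq_one_of_ringChar_ne_two (hσ : IsAntiAuto σ)
    (h2 : ringChar K ≠ 2) : ∃ c ∈ Set.center K, c + σ c = 1 := by
  have hσ2 : σ 2 = 2 := by rw [← one_add_one_eq_two, hσ.2.1, hσ.map_one]
  have : NeZero (2 : K) := ⟨Ring.two_ne_zero h2⟩
  refine ⟨2⁻¹, Set.inv_mem_center (Set.ofNat_mem_center K 2), ?_⟩
  rw [hσ.map_inv, hσ2, ← one_div, add_halves]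

end IsAntiAuto

namespace IsAdmissiblePair

variable {σ : K → K} {ε : K}

theorem map_map_mul_eps (h : IsAdmissiblePair σ ε) (t : K) : σ (σ t * ε) * ε = t := by
  obtain ⟨hσ, hε, hσε, hσσ⟩ := h
  rw [hσ.2.2, hσε, hσσ, mul_assoc, mul_assoc, inv_mul_cancel₀ hε, mul_one,
    inv_mul_cancel_left₀ hε]

theorem trace_eq_map_trace_mul (h : IsAdmissiblePair σ ε) (t : K) :
    t + σ t * ε = σ (t + σ t * ε) * ε := by
  rw [h.1.2.1, add_mul, h.map_map_mul_eps, add_comm]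

theorem map_map_of_mem_center (h : IsAdmissiblePair σ ε) {z : K} (hz : z ∈ Set.center K) :
    σ (σ z) = z := by
  rw [h.2.2.2, Semigroup.mem_center_iff.1 hz ε, mul_inv_cancel_right₀ h.2.1]

theorem exists_mem_center_add_eq_one_of_map_ne (h : IsAdmissiblePair σ ε) {z : K}
    (hz : z ∈ Set.center K) (hσz : σ z ≠ z) : ∃ c ∈ Set.center K, c + σ c = 1 := by
  have hσ := h.1
  set u := z - σ z
  have hu : u ≠ 0 := sub_ne_zero.2 hσz.symm
  have hσu : σ u = -u := by rw [hσ.map_sub, h.map_map_of_mem_center hz, neg_sub]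
  have hu_center : u⁻¹ ∈ Set.center K := by
    refine Set.inv_mem_center (Semigroup.mem_center_iff.2 fun g => ?_)
    have := hσ.map_mem_center hz
    rw [mul_sub, sub_mul, Semigroup.mem_center_iff.1 hz, Semigroup.mem_center_iff.1 this]
  refine ⟨z * u⁻¹, Set.mul_mem_center hz hu_center, ?_⟩
  rw [hσ.2.2, hσ.map_inv, hσu, inv_neg, neg_mul, ← sub_eq_add_neg,
    Semigroup.mem_center_iff.1 hu_center z, ← mul_sub, inv_mul_cancel₀ hu]

end IsAdmissiblePair

universe u

/-- If `char(K) ≠ 2`, or `char(K) = 2` and `σ` is not the identity on the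
center of `K`, then `K₁ = {t : t = σ(t)ε}` equals `K₂ = {t + σ(t)ε : t ∈ K}`; consequently
every `(σ,ε)`-sesquilinear form on a right `K`-vector space is trace-valued. -/
theorem stmt_7 (σ : K → K) (ε : K) (hpair : IsAdmissiblePair σ ε)
    (hchar : ringChar K ≠ 2 ∨ (ringChar K = 2 ∧ ∃ z ∈ Set.center K, σ z ≠ z)) :
    {t : K | t = σ t * ε} = {s : K | ∃ t : K, s = t + σ t * ε} ∧
      ∀ (V : Type u) [AddCommGroup V] [Module Kᵐᵒᵖ V] (φ : V → V → K),
        IsSesq σ ε φ → IsTraceValued σ ε φ := by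
  obtain ⟨c, hc, hc1⟩ : ∃ c ∈ Set.center K, c + σ c = 1 :=
    hchar.elim hpair.1.exists_mem_center_add_eq_one_of_ringChar_ne_two
      fun ⟨_, _, hz, hσz⟩ => hpair.exists_mem_center_add_eq_one_of_map_ne hz hσz
  have mem_traces : ∀ t, t = σ t * ε → ∃ s, t = s + σ s * ε :=
    fun t ht => ⟨c * t, hpair.1.eq_trace_of_mem_center hc hc1 ht⟩
  refine ⟨Set.ext fun s => ⟨mem_traces s, ?_⟩, fun V _ _ φ hφ x => mem_traces _ (hφ.2.2.2.2 x x)⟩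
  rintro ⟨t, rfl⟩
  exact hpair.trace_eq_map_trace_mul t
end

section
/- Let φ be a (σ,ε)-sesquilinear form on V, let A be a maximal totally isotropic subspace of V, and let p ∈ V be an isotropic vector with p ∉ A. Then the subspace spanned by p together with A ∩ p⊥ is a maximal totally isotropic subspace of V. -/
open MulOpposite

variable {K : Type*} [DivisionRing K]

variable {V : Type*} [AddCommGroup V] [Module Kᵐᵒᵖ V]

/-- If `A` is a maximal totally isotropic subspace and `p ∉ A` is an
isotropic vector, then the subspace spanned by `p` together with `A ∩ p⊥` is a maximal
totally isotropic subspace. -/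
theorem stmt_8 (σ : K → K) (ε : K) (hpair : IsAdmissiblePair σ ε)
    (φ : V → V → K) (hφ : IsSesq σ ε φ)
    (A : Submodule Kᵐᵒᵖ V) (hA : IsMaxTotIso φ A)
    (p : V) (hpiso : φ p p = 0) (hpA : p ∉ A) :
    IsMaxTotIso φ (Submodule.span Kᵐᵒᵖ ({p} ∪ {x : V | x ∈ A ∧ φ p x = 0})) := by
  obtain ⟨⟨hσbij, hσadd, hσmul⟩, hε0, hσε, hσσ⟩ := hpair
  obtain ⟨ha1, ha2, hsl, hsr, hrefl⟩ := hφ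
  have hσ0 : σ 0 = 0 := by
    have h := hσadd 0 0
    rw [add_zero] at h
    exact (left_eq_add.mp h)
  have hz2 : ∀ x : V, φ x 0 = 0 := by
    intro x
    have h := ha2 x 0 0
    rw [add_zero] at h
    exact (left_eq_add.mp h)
  have hz1 : ∀ x : V, φ 0 x = 0 := by
    intro x
    have h := ha1 0 0 x
    rw [add_zero] at h
    exact (left_eq_add.mp h)
  have hrefl0 : ∀ x y : V, φ x y = 0 → φ y x = 0 := fun x y h => by
    rw [hrefl, h, hσ0, zero_mul]
  have hneg2 : ∀ x y : V, φ x (-y) = - φ x y := by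
    intro x y
    have h := ha2 x y (-y)
    rw [add_neg_cancel, hz2] at h
    exact eq_neg_of_add_eq_zero_left (by rw [add_comm]; exact h.symm)
  have hsub2 : ∀ x y z : V, φ x (y - z) = φ x y - φ x z := by
    intro x y z
    rw [sub_eq_add_neg, ha2, hneg2, sub_eq_add_neg]
  have hneg1 : ∀ x y : V, φ (-x) y = - φ x y := by
    intro x y
    have h := ha1 x (-x) y
    rw [add_neg_cancel, hz1] at h
    exact eq_neg_of_add_eq_zero_left (by rw [add_comm]; exact h.symm)
  have hsub1 : ∀ x y z : V, φ (x - y) z = φ x z - φ y z := by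
    intro x y z
    rw [sub_eq_add_neg, ha1, hneg1, sub_eq_add_neg]
  -- the subspace W = A ∩ p⊥
  set W : Submodule Kᵐᵒᵖ V :=
    { carrier := {x : V | x ∈ A ∧ φ p x = 0}
      add_mem' := fun {x y} hx hy =>
        ⟨A.add_mem hx.1 hy.1, by rw [ha2, hx.2, hy.2, add_zero]⟩
      zero_mem' := ⟨A.zero_mem, hz2 p⟩
      smul_mem' := fun c x hx =>
        ⟨A.smul_mem c hx.1, by rw [← op_unop c, hsr, hx.2, zero_mul]⟩ } with hWdef
  have hWmem : ∀ x : V, x ∈ W ↔ x ∈ A ∧ φ p x = 0 := fun x => Iff.rfl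
  have hspanB : Submodule.span Kᵐᵒᵖ ({p} ∪ {x : V | x ∈ A ∧ φ p x = 0})
      = Submodule.span Kᵐᵒᵖ {p} ⊔ W := by
    rw [Submodule.span_union]
    congr 1
    exact Submodule.span_eq W
  have hmemB : ∀ x : V, x ∈ Submodule.span Kᵐᵒᵖ {p} ⊔ W ↔
      ∃ β : K, ∃ w ∈ W, x = op β • p + w := by
    intro x
    rw [Submodule.mem_sup]
    constructor
    · rintro ⟨y, hy, z, hz, rfl⟩
      obtain ⟨c, rfl⟩ := Submodule.mem_span_singleton.mp hy
      exact ⟨unop c, z, hz, by rw [op_unop]⟩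
    · rintro ⟨β, w, hw, rfl⟩
      exact ⟨op β • p, Submodule.smul_mem _ _ (Submodule.mem_span_singleton_self p),
        w, hw, rfl⟩
  rw [hspanB]
  have hBiso : IsTotIso φ (Submodule.span Kᵐᵒᵖ {p} ⊔ W) := by
    intro x hx y hy
    obtain ⟨β, w, hw, rfl⟩ := (hmemB x).mp hx
    obtain ⟨γ, w', hw', rfl⟩ := (hmemB y).mp hy
    simp only [ha1, ha2, hsl, hsr]
    rw [hpiso, ((hWmem w').mp hw').2, hrefl0 p w ((hWmem w).mp hw).2,
      hA.1 w ((hWmem w).mp hw).1 w' ((hWmem w').mp hw').1]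
    simp
  refine ⟨hBiso, ?_⟩
  intro T hT hBT
  -- existence of a ∈ A with φ p a ≠ 0
  have hex : ∃ a ∈ A, φ p a ≠ 0 := by
    by_contra hcon
    push_neg at hcon
    have hiso : IsTotIso φ (A ⊔ Submodule.span Kᵐᵒᵖ {p}) := by
      intro x hx y hy
      obtain ⟨u, hu, y1, hy1, rfl⟩ := Submodule.mem_sup.mp hx
      obtain ⟨u', hu', z1, hz1, rfl⟩ := Submodule.mem_sup.mp hy
      obtain ⟨c, rfl⟩ := Submodule.mem_span_singleton.mp hy1
      obtain ⟨d, rfl⟩ := Submodule.mem_span_singleton.mp hz1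
      rw [← op_unop c, ← op_unop d]
      simp only [ha1, ha2, hsl, hsr]
      rw [hpiso, hcon u' hu', hrefl0 p u (hcon u hu), hA.1 u hu u' hu']
      simp
    have heq := hA.2 _ hiso le_sup_left
    have hp' : p ∈ A ⊔ Submodule.span Kᵐᵒᵖ {p} :=
      Submodule.mem_sup_right (Submodule.mem_span_singleton_self p)
    exact hpA (heq ▸ hp')
  obtain ⟨a, haA, hc⟩ := hex
  have hpB : p ∈ Submodule.span Kᵐᵒᵖ {p} ⊔ W :=
    (hmemB p).mpr ⟨1, 0, W.zero_mem, by rw [add_zero, op_one, one_smul]⟩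
  have hpT : p ∈ T := hBT hpB
  have hWT : ∀ w, w ∈ W → w ∈ T := fun w hw =>
    hBT ((hmemB w).mpr ⟨0, w, hw, by rw [op_zero, zero_smul, zero_add]⟩)
  -- decomposition of A : any x ∈ A is w + δ·a with w ∈ W
  have hdecomp : ∀ x ∈ A, ∃ w ∈ W, ∃ δ : K, x = w + op δ • a := by
    intro x hx
    refine ⟨x - op ((φ p a)⁻¹ * φ p x) • a,
      (hWmem _).mpr ⟨A.sub_mem hx (A.smul_mem _ haA), ?_⟩,
      (φ p a)⁻¹ * φ p x, by abel⟩
    rw [hsub2, hsr, ← mul_assoc, mul_inv_cancel₀ hc, one_mul, sub_self]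
  refine le_antisymm ?_ hBT
  intro q hq
  -- adjust q by a multiple of p so that it is orthogonal to a
  obtain ⟨β, hβ⟩ := hσbij.2 (φ q a * (φ p a)⁻¹)
  set q' : V := q - op β • p with hq'def
  have hq'a : φ q' a = 0 := by
    rw [hq'def, hsub1, hsl, hβ, mul_assoc, inv_mul_cancel₀ hc, mul_one, sub_self]
  have hq'T : q' ∈ T := T.sub_mem hq (T.smul_mem _ hpT)
  have hq'orth : ∀ x ∈ A, φ q' x = 0 := by
    intro x hx
    obtain ⟨w, hw, δ, rfl⟩ := hdecomp x hx
    rw [ha2, hsr, hq'a, zero_mul, add_zero, hq'def, hsub1, hsl,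
      ((hWmem w).mp hw).2, mul_zero, hT q hq w (hWT w hw), sub_zero]
  have hAq'iso : IsTotIso φ (A ⊔ Submodule.span Kᵐᵒᵖ {q'}) := by
    intro x hx y hy
    obtain ⟨u, hu, y1, hy1, rfl⟩ := Submodule.mem_sup.mp hx
    obtain ⟨u', hu', z1, hz1, rfl⟩ := Submodule.mem_sup.mp hy
    obtain ⟨c, rfl⟩ := Submodule.mem_span_singleton.mp hy1
    obtain ⟨d, rfl⟩ := Submodule.mem_span_singleton.mp hz1
    rw [← op_unop c, ← op_unop d]
    simp only [ha1, ha2, hsl, hsr]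
    rw [hA.1 u hu u' hu', hq'orth u' hu', hrefl0 q' u (hq'orth u hu),
      hT q' hq'T q' hq'T]
    simp
  have hq'A : q' ∈ A := by
    have heq := hA.2 _ hAq'iso le_sup_left
    have hq'' : q' ∈ A ⊔ Submodule.span Kᵐᵒᵖ {q'} :=
      Submodule.mem_sup_right (Submodule.mem_span_singleton_self q')
    exact heq ▸ hq''
  have hpq' : φ p q' = 0 := by
    rw [hq'def, hsub2, hsr, hpiso, zero_mul, sub_zero]
    exact hT p hpT q hq
  exact (hmemB q).mpr ⟨β, q', (hWmem q').mpr ⟨hq'A, hpq'⟩, by rw [hq'def]; abel⟩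
end

section
/- Let φ be a trace-valued (σ,ε)-sesquilinear form on V. Then one of the following holds: (1) φ is symmetric, i.e. φ(y,x) = φ(x,y) for all x,y ∈ V; (2) φ is alternating, i.e. φ(x,x) = 0 for all x ∈ V (and hence φ(y,x) = −φ(x,y) for all x,y); or (3) φ is proportional to a hermitian form: there exist λ ∈ K \ {0} and an anti-automorphism τ of K with τ ≠ id and τ∘τ = id such that the form ψ defined by ψ(x,y) = λ·φ(x,y) satisfies ψ(xα, y) = τ(α)ψ(x,y), ψ(x, yβ) = ψ(x,y)β, and ψ(y,x) = τ(ψ(x,y)) for all x,y ∈ V and α,β ∈ K. -/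
/-!
If `φ` is not alternating, pick `x₀` with `c = φ(x₀, x₀) ≠ 0`. Reflexivity at `(x₀, x₀)` gives
`σ(c⁻¹) = ε c⁻¹`, which is exactly what makes `τ(t) = c⁻¹ σ(t) c` an involutive anti-automorphism
for which `c⁻¹ φ` is `τ`-hermitian. If this `τ` is the identity, then `σ` is both inner and
anti-multiplicative, so `K` is commutative and `σ = id`; hence `ε = ±1`, and `ε = -1` is excluded
since a trace-valued form would then be alternating.
-/

open MulOpposite

variable {K : Type*} [DivisionRing K]

variable {V : Type*} [AddCommGroup V] [Module Kᵐᵒᵖ V]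

namespace IsAntiAuto

variable {σ : K → K}

noncomputable def toRingEquiv (hσ : IsAntiAuto σ) : K ≃+* Kᵐᵒᵖ where
  toEquiv := (Equiv.ofBijective σ hσ.1).trans MulOpposite.opEquiv
  map_mul' a b := by simp [hσ.2.2]
  map_add' a b := by simp [hσ.2.1]

theorem unop_toRingEquiv (hσ : IsAntiAuto σ) (a : K) : unop (hσ.toRingEquiv a) = σ a := rfl

end IsAntiAuto

def innerConj (σ : K → K) (u t : K) : K := u * σ t * u⁻¹

section innerConj

variable {σ : K → K} {ε u : K}

theorem IsAntiAuto.innerConj (hσ : IsAntiAuto σ) (hu : u ≠ 0) : IsAntiAuto (innerConj σ u) := by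
  refine ⟨(mulRight_bijective₀ _ (inv_ne_zero hu)).comp ((mulLeft_bijective₀ u hu).comp hσ.1),
    fun a b => ?_, fun a b => ?_⟩
  · simp only [_root_.innerConj, hσ.2.1, mul_add, add_mul]
  · simp [_root_.innerConj, hσ.2.2, mul_assoc, inv_mul_cancel_left₀ hu]

theorem innerConj_involutive (hσ : IsAntiAuto σ) (hσσ : ∀ t, σ (σ t) = ε * t * ε⁻¹)
    (hε : ε ≠ 0) (hu : u ≠ 0) (hσu : σ u = ε * u) : Function.Involutive (innerConj σ u) := by
  intro t
  simp only [innerConj, hσ.2.2, hσ.map_inv, hσσ, hσu, mul_inv_rev]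
  simp [mul_assoc, inv_mul_cancel_left₀ hε, mul_inv_cancel_left₀ hu, mul_inv_cancel₀ hu]

theorem mul_comm_of_innerConj_eq_id (hσ : ∀ a b, σ (a * b) = σ b * σ a) (hu : u ≠ 0)
    (h : innerConj σ u = id) (a b : K) : a * b = b * a := by
  have hconj (t : K) : u * σ t * u⁻¹ = t := congrFun h t
  calc a * b = u * σ (a * b) * u⁻¹ := (hconj _).symm
    _ = (u * σ b * u⁻¹) * (u * σ a * u⁻¹) := by
      simp [hσ, mul_assoc, inv_mul_cancel_left₀ hu]
    _ = b * a := by rw [hconj, hconj]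

theorem eq_of_innerConj_eq_id (hσ : ∀ a b, σ (a * b) = σ b * σ a) (hu : u ≠ 0)
    (h : innerConj σ u = id) (t : K) : σ t = t := by
  have hconj : u * σ t * u⁻¹ = t := congrFun h t
  rwa [mul_comm_of_innerConj_eq_id hσ hu h, ← mul_assoc, inv_mul_cancel₀ hu, one_mul] at hconj

end innerConj

theorem apply_swap_eq_neg_of_apply_self_eq_zero {M R : Type*} [AddCommGroup M] [AddCommGroup R]
    {f : M → M → R} (hadd_left : ∀ x y z, f (x + y) z = f x z + f y z)
    (hadd_right : ∀ x y z, f x (y + z) = f x y + f x z) (hf : ∀ x, f x x = 0) (x y : M) :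
    f y x = -f x y := by
  have h := hf (x + y)
  rw [hadd_left, hadd_right, hadd_right, hf x, hf y, zero_add, add_zero] at h
  exact eq_neg_of_add_eq_zero_right h

namespace IsSesq

variable {σ : K → K} {ε u : K} {φ : V → V → K}

theorem map_inv_apply_self (hφ : IsSesq σ ε φ) (hσ : IsAntiAuto σ) (hε : ε ≠ 0) (x : V) :
    σ (φ x x)⁻¹ = ε * (φ x x)⁻¹ := by
  conv_rhs => rw [hφ.2.2.2.2 x x, mul_inv_rev, mul_inv_cancel_left₀ hε]
  exact hσ.map_inv _

theorem mul_apply_smul_left (hφ : IsSesq σ ε φ) (hu : u ≠ 0) (α : K) (x y : V) :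
    u * φ (op α • x) y = innerConj σ u α * (u * φ x y) := by
  simp [innerConj, hφ.2.2.1, mul_assoc, inv_mul_cancel_left₀ hu]

theorem mul_apply_swap (hφ : IsSesq σ ε φ) (hσ : ∀ a b, σ (a * b) = σ b * σ a) (hu : u ≠ 0)
    (hσu : σ u = ε * u) (x y : V) : u * φ y x = innerConj σ u (u * φ x y) := by
  simp [innerConj, hφ.2.2.2.2 x y, hσ, hσu, mul_assoc, mul_inv_cancel₀ hu]

end IsSesq

/-- Every trace-valued `(σ,ε)`-sesquilinear form is symmetric, alternating,
or proportional to a hermitian form. -/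
theorem stmt_14 (σ : K → K) (ε : K) (hpair : IsAdmissiblePair σ ε)
    (φ : V → V → K) (hφ : IsSesq σ ε φ) (htv : IsTraceValued σ ε φ) :
    (∀ x y : V, φ y x = φ x y) ∨
    ((∀ x : V, φ x x = 0) ∧ ∀ x y : V, φ y x = -φ x y) ∨
    (∃ lam : K, lam ≠ 0 ∧ ∃ τ : K → K, IsAntiAuto τ ∧ τ ≠ id ∧ (∀ t : K, τ (τ t) = t) ∧
      (∀ (α : K) (x y : V), lam * φ (op α • x) y = τ α * (lam * φ x y)) ∧
      (∀ (β : K) (x y : V), lam * φ x (op β • y) = (lam * φ x y) * β) ∧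
      ∀ x y : V, lam * φ y x = τ (lam * φ x y)) := by
  obtain ⟨hσ, hε, hσε, hσσ⟩ := hpair
  by_cases halt : ∀ x, φ x x = 0
  · exact Or.inr (Or.inl ⟨halt, apply_swap_eq_neg_of_apply_self_eq_zero hφ.1 hφ.2.1 halt⟩)
  push Not at halt
  obtain ⟨x₀, hx₀⟩ := halt
  set lam := (φ x₀ x₀)⁻¹
  have hlam : lam ≠ 0 := inv_ne_zero hx₀
  have hσlam : σ lam = ε * lam := hφ.map_inv_apply_self hσ hε x₀
  by_cases hτ : innerConj σ lam = id
  · have hσid := eq_of_innerConj_eq_id hσ.2.2 hlam hτ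
    have hεinv : ε⁻¹ = ε := hσε.symm.trans (hσid ε)
    have hεε : ε * ε = 1 := by rw [← mul_inv_cancel₀ hε, hεinv]
    rcases mul_self_eq_one_iff.mp hεε with rfl | rfl
    · exact Or.inl fun x y => by rw [hφ.2.2.2.2, hσid, mul_one]
    · obtain ⟨t, ht⟩ := htv x₀
      rw [hσid, mul_neg_one, add_neg_cancel] at ht
      exact absurd ht hx₀
  · exact Or.inr (Or.inr ⟨lam, hlam, innerConj σ lam, hσ.innerConj hlam, hτ,
      innerConj_involutive hσ hσσ hε hlam hσlam, hφ.mul_apply_smul_left hlam,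
      fun β x y => by rw [hφ.2.2.2.1, mul_assoc], hφ.mul_apply_swap hσ.2.2 hlam hσlam⟩)
end

section
/- Let K_{σ,ε} = {t − σ(t)ε : t ∈ K}. Then K_{σ,ε} = K if and only if char(K) ≠ 2, σ = id, and ε = −1. -/
open MulOpposite

variable {K : Type*} [DivisionRing K]

variable {V : Type*} [AddCommGroup V] [Module Kᵐᵒᵖ V]

/-- `K_{σ,ε} = {t − σ(t)ε : t ∈ K}` equals `K` if and only if
`char(K) ≠ 2`, `σ = id` and `ε = −1`. -/
theorem stmt_15 (σ : K → K) (ε : K) (hpair : IsAdmissiblePair σ ε) :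
    {s : K | ∃ t : K, s = t - σ t * ε} = Set.univ ↔
      (ringChar K ≠ 2 ∧ σ = id ∧ ε = -1) := by
  obtain ⟨⟨hbij, hadd, hmul⟩, hε0, hσε, hσσ⟩ := hpair
  have hσ0 : σ 0 = 0 := by
    have h1 := hadd 0 0
    rw [add_zero] at h1
    exact (left_eq_add.mp h1)
  have hσ1 : σ 1 = 1 := by
    have h1 : σ 1 = σ 1 * σ 1 := by have := hmul 1 1; simpa using this
    have hne : σ 1 ≠ 0 := by
      intro h
      exact one_ne_zero (hbij.injective (h.trans hσ0.symm))
    exact (mul_left_cancel₀ hne (by rw [mul_one, ← h1])).symm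
  have hsub : ∀ a b : K, σ (a - b) = σ a - σ b := by
    intro a b
    have h1 := hadd (a - b) b
    rw [sub_add_cancel] at h1
    exact (eq_sub_of_add_eq h1.symm)
  constructor
  · intro h
    have key : ∀ s : K, σ s * ε = -s := by
      intro s
      have hs : s ∈ {s : K | ∃ t : K, s = t - σ t * ε} := by rw [h]; trivial
      obtain ⟨t, ht⟩ := hs
      have h2 : σ s = σ t - t * ε⁻¹ := by
        rw [ht, hsub, hmul, hσε, hσσ, ← mul_assoc, ← mul_assoc,
          inv_mul_cancel₀ hε0, one_mul]
      rw [h2, sub_mul, mul_assoc, inv_mul_cancel₀ hε0, mul_one, ht, neg_sub]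
    have hε : ε = -1 := by
      have := key 1
      rwa [hσ1, one_mul] at this
    have hσid : σ = id := by
      funext s
      have := key s
      rw [hε, mul_neg_one] at this
      exact neg_injective this
    refine ⟨?_, hσid, hε⟩
    intro hchar
    have h2 : (2 : K) = 0 := by
      have := ringChar.Nat.cast_ringChar (R := K)
      rw [hchar] at this
      exact_mod_cast this
    have h1 : (1 : K) ∈ {s : K | ∃ t : K, s = t - σ t * ε} := by rw [h]; trivial
    obtain ⟨t, ht⟩ := h1
    rw [hσid, hε] at ht
    simp only [id] at ht
    rw [mul_neg_one, sub_neg_eq_add, ← two_mul, h2, zero_mul] at ht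
    exact one_ne_zero ht
  · rintro ⟨hchar, hσid, hε⟩
    have h2 : (2 : K) ≠ 0 := by
      intro h2
      have hdvd : ringChar K ∣ 2 := by
        rw [← ringChar.spec K 2]; exact_mod_cast h2
      rcases (Nat.dvd_prime Nat.prime_two).mp hdvd with h1 | h1
      · have := ringChar.Nat.cast_ringChar (R := K)
        rw [h1] at this
        simp at this
      · exact hchar h1
    ext s
    simp only [Set.mem_setOf_eq, Set.mem_univ, iff_true]
    refine ⟨2⁻¹ * s, ?_⟩
    rw [hσid, hε]
    simp only [id]
    rw [mul_neg_one, sub_neg_eq_add, ← two_mul, ← mul_assoc,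
      mul_inv_cancel₀ h2, one_mul]
end

section
/- Suppose K_{σ,ε} ≠ K and let f : V → K/K_{σ,ε} be a map. If φ and φ' are (σ,ε)-sesquilinear forms on V such that f(x+y) = f(x) + f(y) + π(φ(x,y)) and f(x+y) = f(x) + f(y) + π(φ'(x,y)) for all x, y ∈ V, where π : K → K/K_{σ,ε} is the quotient map of additive groups, then φ = φ'. In other words, the sesquilinearization of a (σ,ε)-pseudoquadratic form is uniquely determined by the form. -/
open MulOpposite

variable {K : Type*} [DivisionRing K]

variable {V : Type*} [AddCommGroup V] [Module Kᵐᵒᵖ V]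

/-- The additive subgroup `K_{σ,ε} = {t − σ(t)ε : t ∈ K}` of `K`. -/
def Ksub (σ : K → K) (ε : K) (hσ : ∀ a b : K, σ (a + b) = σ a + σ b) :
    AddSubgroup K where
  carrier := {s : K | ∃ t : K, s = t - σ t * ε}
  zero_mem' := by
    refine ⟨0, ?_⟩
    have h := hσ 0 0
    rw [add_zero] at h
    have h0 : σ 0 = 0 := left_eq_add.mp h
    simp [h0]
  add_mem' := by
    rintro a b ⟨t, rfl⟩ ⟨s, rfl⟩
    refine ⟨t + s, ?_⟩
    rw [hσ, add_mul]
    abel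
  neg_mem' := by
    rintro a ⟨t, rfl⟩
    refine ⟨-t, ?_⟩
    have h := hσ 0 0
    rw [add_zero] at h
    have h0 : σ 0 = 0 := left_eq_add.mp h
    have h1 : σ t + σ (-t) = 0 := by
      rw [← hσ t (-t), add_neg_cancel, h0]
    have hneg : σ (-t) = -σ t := (neg_eq_of_add_eq_zero_right h1).symm
    rw [hneg, neg_mul, sub_neg_eq_add]
    abel

theorem QuotientAddGroup.sub_mem_of_add_mk_eq_add_mk {G V : Type*} [AddCommGroup G] [Add V]
    {H : AddSubgroup G} (f : V → G ⧸ H) {φ φ' : V → V → G}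
    (h1 : ∀ x y, f (x + y) = f x + f y + QuotientAddGroup.mk' H (φ x y))
    (h2 : ∀ x y, f (x + y) = f x + f y + QuotientAddGroup.mk' H (φ' x y)) (x y : V) :
    φ x y - φ' x y ∈ H := by
  rw [← QuotientAddGroup.eq_iff_sub_mem]
  exact add_left_cancel ((h1 x y).symm.trans (h2 x y))

theorem AddSubgroup.eq_top_of_forall_mul_mem {R : Type*} [DivisionRing R] {H : AddSubgroup R}
    {d : R} (hd : d ≠ 0) (h : ∀ b, d * b ∈ H) : H = ⊤ :=
  eq_top_iff.mpr fun b _ => by simpa [mul_inv_cancel_left₀ hd] using h (d⁻¹ * b)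

theorem stmt_16_general (σ : K → K) (ε : K) (hσadd : ∀ a b : K, σ (a + b) = σ a + σ b)
    (hne : (Ksub σ ε hσadd : Set K) ≠ Set.univ)
    (f : V → K ⧸ Ksub σ ε hσadd)
    (φ φ' : V → V → K) (hφ : IsSesq σ ε φ) (hφ' : IsSesq σ ε φ')
    (h1 : ∀ x y : V,
      f (x + y) = f x + f y + QuotientAddGroup.mk' (Ksub σ ε hσadd) (φ x y))
    (h2 : ∀ x y : V,
      f (x + y) = f x + f y + QuotientAddGroup.mk' (Ksub σ ε hσadd) (φ' x y)) :
    φ = φ' := by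
  funext x y
  by_contra hxy
  refine hne (AddSubgroup.coe_eq_univ.mpr
    (AddSubgroup.eq_top_of_forall_mul_mem (sub_ne_zero.mpr hxy) fun β => ?_))
  have hmem := QuotientAddGroup.sub_mem_of_add_mk_eq_add_mk f h1 h2 x (op β • y)
  rwa [hφ.2.2.2.1, hφ'.2.2.2.1, ← sub_mul] at hmem

/-- If `K_{σ,ε} ≠ K`, then the sesquilinearization of a pseudoquadratic
form is uniquely determined: if `f : V → K/K_{σ,ε}` satisfies the cocycle identity with
respect to two `(σ,ε)`-sesquilinear forms `φ` and `φ'`, then `φ = φ'`. -/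
theorem stmt_16 (σ : K → K) (ε : K) (hpair : IsAdmissiblePair σ ε)
    (hσadd : ∀ a b : K, σ (a + b) = σ a + σ b)
    (hne : (Ksub σ ε hσadd : Set K) ≠ Set.univ)
    (f : V → K ⧸ Ksub σ ε hσadd)
    (φ φ' : V → V → K) (hφ : IsSesq σ ε φ) (hφ' : IsSesq σ ε φ')
    (h1 : ∀ x y : V,
      f (x + y) = f x + f y + QuotientAddGroup.mk' (Ksub σ ε hσadd) (φ x y))
    (h2 : ∀ x y : V,
      f (x + y) = f x + f y + QuotientAddGroup.mk' (Ksub σ ε hσadd) (φ' x y)) :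
    φ = φ' :=
  stmt_16_general σ ε hσadd hne f φ φ' hφ hφ' h1 h2
end

section
/- Let K be a perfect field of characteristic 2, V a K-vector space, Q : V → K a quadratic form, and φ its polar form. If Q is non-singular, i.e. the only vector v ∈ Rad(φ) with Q(v) = 0 is v = 0, then dim Rad(φ) ≤ 1; moreover, if dim Rad(φ) = 1, then every 2-dimensional subspace of V containing Rad(φ) contains exactly one 1-dimensional subspace consisting of singular vectors (i.e. vectors v with Q(v) = 0). -/
/-!
On the radical `R` the form is additive, `Q (a + x) = Q a + Q x`, and in characteristic `2`
over a perfect field every value is a square. Hence for an anisotropic `e ∈ R` and any `x`,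
choosing `t² = Q x / Q e` gives `Q (t • e + x) = Q x + Q x = 0`. Applied to `x ∈ R`,
non-singularity forces `x = -t • e`, so `R ⊆ K ∙ e`. Applied to `x ∈ l \ R` for a plane
`l ⊇ R = K ∙ e`, it produces a singular `v₀` with `l = span {e, v₀}`; there
`Q (a • e + c • v₀) = a² Q e`, so the singular vectors of `l` are exactly the line `K ∙ v₀`.
-/

open Submodule

section

variable {K V : Type*} [Field K] [AddCommGroup V] [Module K V]

theorem span_pair_eq_of_rank_eq_two {l : Submodule K V} (hl : Module.rank K l = 2) {x y : V}
    (hx : x ∈ l) (hy : y ∈ l) (hx0 : x ≠ 0) (hxy : y ∉ K ∙ x) : span K {x, y} = l := by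
  have : FiniteDimensional K l := .of_rank_eq_nat (n := 2) (by exact_mod_cast hl)
  have hle : span K {x, y} ≤ l := span_le.2 (Set.insert_subset hx (Set.singleton_subset_iff.2 hy))
  have hlt : K ∙ x < span K {x, y} :=
    SetLike.lt_iff_le_and_exists.2 ⟨span_mono (Set.singleton_subset_iff.2 (Set.mem_insert x {y})),
      y, subset_span (Set.mem_insert_of_mem x rfl), hxy⟩
  have : FiniteDimensional K (span K {x, y}) := finiteDimensional_of_le hle
  refine eq_of_le_of_finrank_le hle ?_
  calc Module.finrank K l = 2 := Module.finrank_eq_of_rank_eq (by exact_mod_cast hl)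
    _ ≤ Module.finrank K (span K {x, y}) := by
      simpa [finrank_span_singleton hx0] using (finrank_lt_finrank_of_lt hlt).nat_succ_le

theorem existsUnique_singular_line {Q : V → K}
    (hQhom : ∀ (t : K) (x : V), Q (t • x) = t * t * Q x)
    {l : Submodule K V} {v₀ : V} (hv₀ : v₀ ∈ l) (hv₀0 : v₀ ≠ 0) (hQv₀ : Q v₀ = 0)
    (hsing : ∀ u ∈ l, Q u = 0 → u ∈ K ∙ v₀) :
    ∃! p : Submodule K V, p ≤ l ∧ Module.rank K p = 1 ∧ ∀ v ∈ p, Q v = 0 := by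
  refine ⟨K ∙ v₀, ⟨span_singleton_le_iff_mem _ _ |>.2 hv₀,
    (rank_submodule_eq_one_iff _).2 ⟨v₀, mem_span_singleton_self v₀, hv₀0, le_rfl⟩, ?_⟩,
    ?_⟩
  · intro v hv
    obtain ⟨c, rfl⟩ := mem_span_singleton.1 hv
    rw [hQhom, hQv₀, mul_zero]
  · rintro p ⟨hpl, hp1, hpQ⟩
    refine eq_of_le_of_finrank_eq (fun u hu ↦ hsing u (hpl hu) (hpQ u hu)) ?_
    rw [Module.finrank_eq_of_rank_eq (n := 1) (by exact_mod_cast hp1),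
      finrank_span_singleton hv₀0]

section Radical

variable {Q : V → K} {R : Submodule K V}

theorem exists_smul_add_singular [CharP K 2] (hperf : ∀ a : K, ∃ b : K, b * b = a)
    (hQhom : ∀ (t : K) (x : V), Q (t • x) = t * t * Q x)
    (hadd : ∀ a ∈ R, ∀ x : V, Q (a + x) = Q a + Q x) {e : V} (he : e ∈ R) (hQe : Q e ≠ 0)
    (x : V) : ∃ t : K, Q (t • e + x) = 0 := by
  obtain ⟨t, ht⟩ := hperf (Q x / Q e)
  refine ⟨t, ?_⟩
  rw [hadd _ (R.smul_mem t he), hQhom, ht, div_mul_cancel₀ _ hQe]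
  exact CharTwo.add_self_eq_zero (Q x)

theorem le_span_singleton_of_anisotropic [CharP K 2] (hperf : ∀ a : K, ∃ b : K, b * b = a)
    (hQhom : ∀ (t : K) (x : V), Q (t • x) = t * t * Q x)
    (hadd : ∀ a ∈ R, ∀ x : V, Q (a + x) = Q a + Q x) (hns : ∀ v ∈ R, Q v = 0 → v = 0)
    {e : V} (he : e ∈ R) (hQe : Q e ≠ 0) : R ≤ K ∙ e := by
  intro a ha
  obtain ⟨t, ht⟩ := exists_smul_add_singular hperf hQhom hadd he hQe a
  have hzero : t • e + a = 0 := hns _ (R.add_mem (R.smul_mem t he) ha) ht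
  exact mem_span_singleton.2 ⟨-t, by rw [neg_smul, neg_eq_iff_add_eq_zero, hzero]⟩

theorem rank_le_one_of_nonsingular [CharP K 2] (hperf : ∀ a : K, ∃ b : K, b * b = a)
    (hQhom : ∀ (t : K) (x : V), Q (t • x) = t * t * Q x)
    (hadd : ∀ a ∈ R, ∀ x : V, Q (a + x) = Q a + Q x) (hns : ∀ v ∈ R, Q v = 0 → v = 0) :
    Module.rank K R ≤ 1 := by
  rw [rank_submodule_le_one_iff']
  by_cases h : ∃ e ∈ R, e ≠ 0
  · obtain ⟨e, he, he0⟩ := h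
    exact ⟨e, le_span_singleton_of_anisotropic hperf hQhom hadd hns he
      fun hQe ↦ he0 (hns e he hQe)⟩
  · push Not at h
    exact ⟨0, fun a ha ↦ (h a ha).symm ▸ zero_mem _⟩

theorem mem_span_singleton_of_singular_of_mem_span_pair
    (hQhom : ∀ (t : K) (x : V), Q (t • x) = t * t * Q x)
    (hadd : ∀ a ∈ R, ∀ x : V, Q (a + x) = Q a + Q x) {e v u : V} (he : e ∈ R)
    (hQe : Q e ≠ 0) (hQv : Q v = 0) (hu : u ∈ span K {e, v}) (hQu : Q u = 0) : u ∈ K ∙ v := by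
  obtain ⟨a, c, rfl⟩ := mem_span_pair.1 hu
  have hQ : Q (a • e + c • v) = a * a * Q e := by
    rw [hadd _ (R.smul_mem a he), hQhom, hQhom, hQv, mul_zero, add_zero]
  have ha : a = 0 := by
    rw [hQu, eq_comm] at hQ
    exact mul_self_eq_zero.1 ((mul_eq_zero.1 hQ).resolve_right hQe)
  rw [ha, zero_smul, zero_add]
  exact smul_mem _ c (mem_span_singleton_self v)

theorem existsUnique_singular_line_of_rank_eq_one [CharP K 2]
    (hperf : ∀ a : K, ∃ b : K, b * b = a)
    (hQhom : ∀ (t : K) (x : V), Q (t • x) = t * t * Q x)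
    (hadd : ∀ a ∈ R, ∀ x : V, Q (a + x) = Q a + Q x) (hns : ∀ v ∈ R, Q v = 0 → v = 0)
    (hR1 : Module.rank K R = 1) {l : Submodule K V} (hl2 : Module.rank K l = 2) (hRl : R ≤ l) :
    ∃! p : Submodule K V, p ≤ l ∧ Module.rank K p = 1 ∧ ∀ v ∈ p, Q v = 0 := by
  obtain ⟨e, he, he0, -⟩ := (rank_submodule_eq_one_iff R).1 hR1
  have hQe : Q e ≠ 0 := fun h ↦ he0 (hns e he h)
  have hRlt : R < l := lt_of_le_of_ne hRl fun h ↦ by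
    rw [h, hl2] at hR1
    norm_num at hR1
  obtain ⟨f, hfl, hfR⟩ := SetLike.exists_of_lt hRlt
  obtain ⟨t, hQv₀⟩ := exists_smul_add_singular hperf hQhom hadd he hQe f
  have hv₀l : t • e + f ∈ l := l.add_mem (l.smul_mem t (hRl he)) hfl
  have hv₀e : t • e + f ∉ K ∙ e := fun h ↦ hfR <| by
    simpa using R.sub_mem ((span_singleton_le_iff_mem _ _).2 he h) (R.smul_mem t he)
  have hl : span K {e, t • e + f} = l :=
    span_pair_eq_of_rank_eq_two hl2 (hRl he) hv₀l he0 hv₀e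
  refine existsUnique_singular_line hQhom hv₀l (fun h ↦ hv₀e (h ▸ zero_mem _)) hQv₀ ?_
  intro u hu hQu
  exact mem_span_singleton_of_singular_of_mem_span_pair hQhom hadd he hQe hQv₀ (hl ▸ hu) hQu

end Radical

end

theorem stmt_19_general {K : Type*} [Field K] {V : Type*} [AddCommGroup V] [Module K V]
    (hchar : ringChar K = 2) (hperf : ∀ a : K, ∃ b : K, b * b = a)
    (Q : V → K) (hQhom : ∀ (t : K) (x : V), Q (t • x) = t * t * Q x)
    (R : Submodule K V)
    (hR : (R : Set V) = {a : V | ∀ x : V, Q (a + x) - Q a - Q x = 0})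
    (hns : ∀ v ∈ R, Q v = 0 → v = 0) :
    Module.rank K ↥R ≤ 1 ∧
      (Module.rank K ↥R = 1 →
        ∀ l : Submodule K V, Module.rank K ↥l = 2 → R ≤ l →
          ∃! p : Submodule K V, p ≤ l ∧ Module.rank K ↥p = 1 ∧ ∀ v ∈ p, Q v = 0) := by
  have : CharP K 2 := hchar ▸ ringChar.charP K
  have hadd : ∀ a ∈ R, ∀ x : V, Q (a + x) = Q a + Q x := fun a ha x ↦ by
    have h : a ∈ {a : V | ∀ x : V, Q (a + x) - Q a - Q x = 0} := hR ▸ ha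
    linear_combination h x
  exact ⟨rank_le_one_of_nonsingular hperf hQhom hadd hns, fun hR1 l hl2 hRl ↦
    existsUnique_singular_line_of_rank_eq_one hperf hQhom hadd hns hR1 hl2 hRl⟩

/-- Let `K` be a perfect field of characteristic 2, `Q : V → K` a quadratic
form with (bilinear) polar form `φ(x,y) = Q(x+y) − Q(x) − Q(y)`. If `Q` is non-singular
(the only vector of `Rad(φ)` on which `Q` vanishes is `0`), then `dim Rad(φ) ≤ 1`;
moreover, if `dim Rad(φ) = 1`, then every 2-dimensional subspace of `V` containing
`Rad(φ)` contains exactly one 1-dimensional subspace consisting of singular vectors. -/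
theorem stmt_19 {K : Type*} [Field K] {V : Type*} [AddCommGroup V] [Module K V]
    (hchar : ringChar K = 2) (hperf : ∀ a : K, ∃ b : K, b * b = a)
    (Q : V → K) (hQhom : ∀ (t : K) (x : V), Q (t • x) = t * t * Q x)
    (hQpolar : ∀ (t : K) (x x' y : V),
      Q (t • x + x' + y) - Q (t • x + x') - Q y =
        t * (Q (x + y) - Q x - Q y) + (Q (x' + y) - Q x' - Q y))
    (R : Submodule K V)
    (hR : (R : Set V) = {a : V | ∀ x : V, Q (a + x) - Q a - Q x = 0})
    (hns : ∀ v ∈ R, Q v = 0 → v = 0) :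
    Module.rank K ↥R ≤ 1 ∧
      (Module.rank K ↥R = 1 →
        ∀ l : Submodule K V, Module.rank K ↥l = 2 → R ≤ l →
          ∃! p : Submodule K V, p ≤ l ∧ Module.rank K ↥p = 1 ∧ ∀ v ∈ p, Q v = 0) :=
  stmt_19_general hchar hperf Q hQhom R hR hns
end
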